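/- arXiv:2409.02204 — 2 statements merged into one kernel-verified Lean document; each statement's English description precedes it below -/
import Mathlib

section
/- Let μ, σ > 0, δ ∈ {0,1}, s ≠ 0, and let X = (1-B)·Z₁^(-1/s) + B·Z₂^(-1/s) with B ~ Bernoulli(δ/(σ+δ)) independent of Z₁ ~ Gamma(μ, 1/(μσ)) and Z₂ ~ Gamma(μ+1, 1/(μσ)). Then for any real p with μ + p/s > 0, E[X^(-p) log X] = -(1/s)·(Γ(μ+p/s)/((μσ)^(p/s) Γ(μ)))·{ (σ/(σ+δ))·[ψ(μ+p/s) - log(μσ)] + (δ/(σ+δ))·((μ+p/s)/μ)·[ψ(μ+p/s+1) - log(μσ)] }. -/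
/-!
Since `B ∈ {0, 1}`, pointwise `X^(-p) log X = -(1/s)·((1 - B)·Z₁^(p/s) log Z₁ + B·Z₂^(p/s) log Z₂)`,
and independence of `B` from `(Z₁, Z₂)` turns the expectation into the `P(B = 1)`-weighted
combination of two Gamma log-moments. For `Z ~ Gamma(a, r)` the substitution `x = u / r` gives
`E[Z^q log Z] = r^(-q)·(Γ'(a + q) - log r·Γ(a + q)) / Γ(a)`, where `Γ'(t) = ∫ x^(t-1) log x e^(-x) dx`
is obtained by differentiating the Gamma integral. The two moments are then brought to the common
factor `Γ(μ + p/s) / Γ(μ)` by `Γ(x + 1) = x·Γ(x)`.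
-/

open Real MeasureTheory ProbabilityTheory

/-- The digamma function `ψ = Γ'/Γ`. -/
noncomputable def digamma (x : ℝ) : ℝ := deriv Real.Gamma x / Real.Gamma x

open Set Filter Asymptotics

section GammaIntegral

variable {t : ℝ}

theorem integrableOn_rpow_mul_log_mul_exp_neg (ht : 0 < t) :
    IntegrableOn (fun x : ℝ => x ^ (t - 1) * (log x * exp (-x))) (Ioi 0) := by
  have hconv : MellinConvergent (fun x : ℝ => log x • ((exp (-x) : ℝ) : ℂ)) (t : ℂ) := by
    refine (mellin_hasDerivAt_of_isBigO_rpow (a := t + 1) (b := 0) ?_ ?_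
      (by simp) ?_ (by simpa using ht)).1
    · exact (Continuous.continuousOn (by fun_prop)).locallyIntegrableOn measurableSet_Ioi
    · rw [← isBigO_norm_left]
      simp_rw [Complex.norm_real, isBigO_norm_left]
      simpa only [neg_one_mul] using (isLittleO_exp_neg_mul_rpow_atTop zero_lt_one _).isBigO
    · simp_rw [neg_zero, rpow_zero]
      refine isBigO_const_of_tendsto (?_ : Tendsto _ _ (nhds (1 : ℂ))) one_ne_zero
      rw [(by simp : (1 : ℂ) = ((exp (-0) : ℝ) : ℂ))]
      exact (Continuous.continuousWithinAt (by fun_prop))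
  refine IntegrableOn.congr_fun hconv.re (fun x (hx : 0 < x) => ?_) measurableSet_Ioi
  rw [show (t : ℂ) - 1 = ((t - 1 : ℝ) : ℂ) by push_cast; ring, ← Complex.ofReal_cpow hx.le]
  simp only [Complex.real_smul, smul_eq_mul, ← Complex.ofReal_mul, RCLike.re_to_complex,
    Complex.ofReal_re]

theorem deriv_Gamma_eq_integral (ht : 0 < t) :
    deriv Gamma t = ∫ x in Ioi (0 : ℝ), x ^ (t - 1) * (log x * exp (-x)) := by
  have hre : 0 < (t : ℂ).re := by simpa using ht
  have hGamma : Complex.Gamma =ᶠ[nhds (t : ℂ)] Complex.GammaIntegral := by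
    filter_upwards [(Complex.continuous_re.isOpen_preimage _ isOpen_Ioi).mem_nhds hre] with z hz
    exact Complex.Gamma_eq_integral hz
  have hcomplex := (Complex.hasDerivAt_GammaIntegral hre).congr_of_eventuallyEq hGamma
  have hreal : (∫ x : ℝ in Ioi 0, (x : ℂ) ^ ((t : ℂ) - 1) * (log x * exp (-x))) =
      ((∫ x in Ioi (0 : ℝ), x ^ (t - 1) * (log x * exp (-x)) : ℝ) : ℂ) := by
    refine Eq.trans (setIntegral_congr_fun measurableSet_Ioi fun x (hx : 0 < x) => ?_)
      integral_ofReal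
    rw [show (t : ℂ) - 1 = ((t - 1 : ℝ) : ℂ) by push_cast; ring, ← Complex.ofReal_cpow hx.le]
    norm_cast
  rw [hreal] at hcomplex
  simpa [Complex.Gamma_ofReal] using hcomplex.real_of_complex.deriv

end GammaIntegral

section ScaledGammaIntegral

variable {t r : ℝ}

theorem rpow_mul_exp_neg_mul_mul_log_eq (hr : 0 < r) {x : ℝ} (hx : 0 < x) :
    x ^ (t - 1) * exp (-(r * x)) * log x =
      r ^ (1 - t) * ((r * x) ^ (t - 1) * exp (-(r * x)) * (log (r * x) - log r)) := by
  have hpow : r ^ (1 - t) * (r * x) ^ (t - 1) = x ^ (t - 1) := by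
    rw [mul_rpow hr.le hx.le, ← mul_assoc, ← rpow_add hr, sub_add_sub_cancel', sub_self,
      rpow_zero, one_mul]
  rw [log_mul hr.ne' hx.ne', add_sub_cancel_left, ← mul_assoc, ← mul_assoc, hpow]

theorem integrableOn_rpow_mul_exp_neg_mul_log_sub_log (ht : 0 < t) :
    IntegrableOn (fun u : ℝ => u ^ (t - 1) * exp (-u) * (log u - log r)) (Ioi 0) := by
  refine IntegrableOn.congr_fun ((integrableOn_rpow_mul_log_mul_exp_neg ht).sub
    ((GammaIntegral_convergent ht).const_mul (log r))) (fun u _ => ?_) measurableSet_Ioi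
  simp only [Pi.sub_apply]
  ring

theorem integrableOn_rpow_mul_exp_neg_mul_mul_log (ht : 0 < t) (hr : 0 < r) :
    IntegrableOn (fun x : ℝ => x ^ (t - 1) * exp (-(r * x)) * log x) (Ioi 0) := by
  have hscaled := (integrableOn_Ioi_comp_mul_left_iff
    (fun u : ℝ => u ^ (t - 1) * exp (-u) * (log u - log r)) 0 hr).2
    (by simpa using integrableOn_rpow_mul_exp_neg_mul_log_sub_log ht)
  exact IntegrableOn.congr_fun (hscaled.const_mul (r ^ (1 - t)))
    (fun x hx => (rpow_mul_exp_neg_mul_mul_log_eq hr hx).symm) measurableSet_Ioi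

theorem integral_rpow_mul_exp_neg_mul_mul_log (ht : 0 < t) (hr : 0 < r) :
    ∫ x in Ioi (0 : ℝ), x ^ (t - 1) * exp (-(r * x)) * log x =
      r ^ (-t) * (deriv Gamma t - log r * Gamma t) := by
  have hunscaled : ∫ u in Ioi (0 : ℝ), u ^ (t - 1) * exp (-u) * (log u - log r) =
      deriv Gamma t - log r * Gamma t := by
    rw [deriv_Gamma_eq_integral ht, Gamma_eq_integral ht, ← integral_const_mul,
      ← integral_sub (integrableOn_rpow_mul_log_mul_exp_neg ht)
        ((GammaIntegral_convergent ht).const_mul _)]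
    exact setIntegral_congr_fun measurableSet_Ioi fun u _ => by ring
  have hscaled := integral_comp_mul_left_Ioi
    (fun u : ℝ => u ^ (t - 1) * exp (-u) * (log u - log r)) 0 hr
  rw [mul_zero] at hscaled
  rw [setIntegral_congr_fun measurableSet_Ioi fun x hx => rpow_mul_exp_neg_mul_mul_log_eq hr hx,
    integral_const_mul, hscaled, hunscaled, smul_eq_mul, ← mul_assoc, ← rpow_neg_one r,
    ← rpow_add hr, show 1 - t + -1 = -t by ring]

end ScaledGammaIntegral

section GammaMeasure

variable {a r : ℝ}

theorem gammaMeasure_eq_withDensity_toNNReal :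
    gammaMeasure a r = volume.withDensity fun x => ((gammaPDFReal a r x).toNNReal : ENNReal) :=
  rfl

theorem toNNReal_gammaPDFReal_smul (ha : 0 < a) (hr : 0 < r) (f : ℝ → ℝ) :
    (fun x => (gammaPDFReal a r x).toNNReal • f x) = fun x => gammaPDFReal a r x * f x := by
  ext x
  rw [NNReal.smul_def, Real.coe_toNNReal _ (gammaPDFReal_nonneg ha hr x), smul_eq_mul]

theorem support_gammaPDFReal_mul_subset (f : ℝ → ℝ) :
    (fun x => gammaPDFReal a r x * f x).support ⊆ Ici 0 := by
  intro x hx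
  by_contra hneg
  exact hx (by simp only [gammaPDFReal, if_neg (notMem_Ici.1 hneg).not_ge, zero_mul])

theorem integrable_gammaMeasure_iff (ha : 0 < a) (hr : 0 < r) {f : ℝ → ℝ} :
    Integrable f (gammaMeasure a r) ↔
      IntegrableOn (fun x => gammaPDFReal a r x * f x) (Ioi 0) := by
  rw [gammaMeasure_eq_withDensity_toNNReal,
    integrable_withDensity_iff_integrable_smul (measurable_gammaPDFReal a r).real_toNNReal,
    toNNReal_gammaPDFReal_smul ha hr, ← integrableOn_Ici_iff_integrableOn_Ioi,
    integrableOn_iff_integrable_of_support_subset (support_gammaPDFReal_mul_subset f)]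

theorem integral_gammaMeasure (ha : 0 < a) (hr : 0 < r) (f : ℝ → ℝ) :
    ∫ x, f x ∂gammaMeasure a r = ∫ x in Ioi 0, gammaPDFReal a r x * f x := by
  rw [gammaMeasure_eq_withDensity_toNNReal,
    integral_withDensity_eq_integral_smul (measurable_gammaPDFReal a r).real_toNNReal,
    toNNReal_gammaPDFReal_smul ha hr, ← integral_Ici_eq_integral_Ioi,
    setIntegral_eq_integral_of_forall_compl_eq_zero
      fun x hx => Function.notMem_support.1 fun h => hx (support_gammaPDFReal_mul_subset f h)]

theorem ae_pos_gammaMeasure : ∀ᵐ x ∂gammaMeasure a r, 0 < x := by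
  rw [ae_iff]
  simp only [not_lt]
  change gammaMeasure a r (Iic 0) = 0
  rw [gammaMeasure, withDensity_apply _ measurableSet_Iic,
    setLIntegral_congr Iio_ae_eq_Iic.symm]
  exact lintegral_gammaPDF_of_nonpos le_rfl

theorem gammaPDFReal_mul_rpow_mul_log {q x : ℝ} (hx : 0 < x) :
    gammaPDFReal a r x * (x ^ q * log x) =
      r ^ a / Gamma a * (x ^ (a + q - 1) * exp (-(r * x)) * log x) := by
  rw [gammaPDFReal, if_pos hx.le, add_sub_right_comm, rpow_add hx]
  ring

variable {q : ℝ}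

theorem integrable_rpow_mul_log_gammaMeasure (ha : 0 < a) (hr : 0 < r) (hq : 0 < a + q) :
    Integrable (fun x => x ^ q * log x) (gammaMeasure a r) :=
  (integrable_gammaMeasure_iff ha hr).2 <|
    IntegrableOn.congr_fun ((integrableOn_rpow_mul_exp_neg_mul_mul_log hq hr).const_mul _)
      (fun _ hx => (gammaPDFReal_mul_rpow_mul_log hx).symm) measurableSet_Ioi

theorem integral_rpow_mul_log_gammaMeasure (ha : 0 < a) (hr : 0 < r) (hq : 0 < a + q) :
    ∫ x, x ^ q * log x ∂gammaMeasure a r =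
      Gamma (a + q) / (r ^ q * Gamma a) * (digamma (a + q) - log r) := by
  rw [integral_gammaMeasure ha hr,
    setIntegral_congr_fun measurableSet_Ioi fun _ hx => gammaPDFReal_mul_rpow_mul_log hx,
    integral_const_mul, integral_rpow_mul_exp_neg_mul_mul_log hq hr, digamma,
    rpow_neg hr.le, rpow_add hr]
  have := (Gamma_pos_of_pos ha).ne'
  have := (Gamma_pos_of_pos hq).ne'
  have := (rpow_pos_of_pos hr a).ne'
  have := (rpow_pos_of_pos hr q).ne'
  field_simp

variable {Ω : Type*} [MeasurableSpace Ω] {P : Measure Ω} {Z : Ω → ℝ}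

theorem integrable_rpow_mul_log_of_map_eq_gammaMeasure (hZm : Measurable Z)
    (hZ : P.map Z = gammaMeasure a r) (ha : 0 < a) (hr : 0 < r) (hq : 0 < a + q) :
    Integrable (fun ω => Z ω ^ q * log (Z ω)) P :=
  (integrable_map_measure (g := fun x => x ^ q * log x) (by fun_prop) hZm.aemeasurable).1 <|
    hZ ▸ integrable_rpow_mul_log_gammaMeasure ha hr hq

theorem integral_rpow_mul_log_of_map_eq_gammaMeasure (hZm : Measurable Z)
    (hZ : P.map Z = gammaMeasure a r) (ha : 0 < a) (hr : 0 < r) (hq : 0 < a + q) :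
    ∫ ω, Z ω ^ q * log (Z ω) ∂P =
      Gamma (a + q) / (r ^ q * Gamma a) * (digamma (a + q) - log r) := by
  rw [← integral_map (f := fun x => x ^ q * log x) hZm.aemeasurable (by fun_prop), hZ,
    integral_rpow_mul_log_gammaMeasure ha hr hq]

end GammaMeasure

section BernoulliMixture

variable {Ω : Type*} [MeasurableSpace Ω] {P : Measure Ω} {B : Ω → ℝ}

theorem apply_one_sub_mul_add_mul_of_eq_zero_or_eq_one {b : ℝ} (hb : b = 0 ∨ b = 1)
    (h : ℝ → ℝ) (y₁ y₂ : ℝ) :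
    h ((1 - b) * y₁ + b * y₂) = (1 - b) * h y₁ + b * h y₂ := by
  rcases hb with rfl | rfl <;> simp

theorem integral_eq_measureReal_of_eq_zero_or_eq_one (hB : Measurable B)
    (hB01 : ∀ ω, B ω = 0 ∨ B ω = 1) :
    ∫ ω, B ω ∂P = P.real {ω | B ω = 1} := by
  have hindicator : B = {ω | B ω = 1}.indicator 1 := by
    ext ω
    rcases hB01 ω with h | h <;> simp [h]
  conv_lhs => rw [hindicator]
  exact integral_indicator_one (hB (measurableSet_singleton 1))

variable [IsProbabilityMeasure P] {α β : Type*} [MeasurableSpace α] [MeasurableSpace β]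
  {Z₁ : Ω → α} {Z₂ : Ω → β} {f₁ : α → ℝ} {f₂ : β → ℝ}

theorem integral_bernoulli_mixture (hB : Measurable B) (hB01 : ∀ ω, B ω = 0 ∨ B ω = 1)
    (hindep : IndepFun B (fun ω => (Z₁ ω, Z₂ ω)) P) (hf₁ : Measurable f₁) (hf₂ : Measurable f₂)
    (hi₁ : Integrable (fun ω => f₁ (Z₁ ω)) P) (hi₂ : Integrable (fun ω => f₂ (Z₂ ω)) P) :
    ∫ ω, (1 - B ω) * f₁ (Z₁ ω) + B ω * f₂ (Z₂ ω) ∂P =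
      (1 - P.real {ω | B ω = 1}) * ∫ ω, f₁ (Z₁ ω) ∂P +
        P.real {ω | B ω = 1} * ∫ ω, f₂ (Z₂ ω) ∂P := by
  have hBint : Integrable B P := by
    refine Integrable.of_bound hB.aestronglyMeasurable 1 (ae_of_all _ fun ω => ?_)
    rcases hB01 ω with h | h <;> simp [h]
  have hind₁ : IndepFun (fun ω => 1 - B ω) (fun ω => f₁ (Z₁ ω)) P :=
    hindep.comp (measurable_const.sub measurable_id) (hf₁.comp measurable_fst)
  have hind₂ : IndepFun B (fun ω => f₂ (Z₂ ω)) P :=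
    hindep.comp measurable_id (hf₂.comp measurable_snd)
  have hEB := integral_eq_measureReal_of_eq_zero_or_eq_one (P := P) hB hB01
  have hm₁ : Integrable (fun ω => (1 - B ω) * f₁ (Z₁ ω)) P :=
    hind₁.integrable_mul ((integrable_const 1).sub hBint) hi₁
  have hm₂ : Integrable (fun ω => B ω * f₂ (Z₂ ω)) P := hind₂.integrable_mul hBint hi₂
  rw [integral_add hm₁ hm₂,
    hind₁.integral_fun_mul_eq_mul_integral (measurable_const.sub hB).aestronglyMeasurable
      hi₁.aestronglyMeasurable,
    hind₂.integral_fun_mul_eq_mul_integral hB.aestronglyMeasurable hi₂.aestronglyMeasurable,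
    integral_sub (integrable_const 1) hBint, hEB]
  simp

end BernoulliMixture

theorem rpow_neg_one_div_rpow_neg_mul_log {z : ℝ} (hz : 0 < z) (s p : ℝ) :
    (z ^ (-1 / s)) ^ (-p) * log (z ^ (-1 / s)) = -(1 / s) * (z ^ (p / s) * log z) := by
  rw [← rpow_mul hz.le, log_rpow hz]
  ring_nf

theorem weighted_family_neg_p_log_moment_general {Ω : Type*} [MeasurableSpace Ω]
    (P : Measure Ω) [IsProbabilityMeasure P]
    (μ σ δ s : ℝ) (hμ : 0 < μ) (hσ : 0 < σ) (hδ : δ = 0 ∨ δ = 1)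
    (B Z₁ Z₂ : Ω → ℝ)
    (hB : Measurable B) (hZ₁m : Measurable Z₁) (hZ₂m : Measurable Z₂)
    (hB01 : ∀ ω, B ω = 0 ∨ B ω = 1)
    (hBp : (P {ω | B ω = 1}).toReal = δ / (σ + δ))
    (hindep : IndepFun B (fun ω => (Z₁ ω, Z₂ ω)) P)
    (hZ₁ : Measure.map Z₁ P = gammaMeasure μ (μ * σ))
    (hZ₂ : Measure.map Z₂ P = gammaMeasure (μ + 1) (μ * σ))
    (X : Ω → ℝ)
    (hX : ∀ ω, X ω = (1 - B ω) * Z₁ ω ^ (-1 / s) + B ω * Z₂ ω ^ (-1 / s))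
    (p : ℝ) (hp : 0 < μ + p / s) :
    ∫ ω, X ω ^ (-p) * Real.log (X ω) ∂P =
      -(1 / s) * (Real.Gamma (μ + p / s) / ((μ * σ) ^ (p / s) * Real.Gamma μ)) *
        (σ / (σ + δ) * (digamma (μ + p / s) - Real.log (μ * σ)) +
          δ / (σ + δ) * ((μ + p / s) / μ) *
            (digamma (μ + p / s + 1) - Real.log (μ * σ))) := by
  have hr : 0 < μ * σ := mul_pos hμ hσ
  have hμ₁ : 0 < μ + 1 := by linarith
  have hp₁ : 0 < μ + 1 + p / s := by linarith
  have hdecomp : ∀ᵐ ω ∂P, X ω ^ (-p) * log (X ω) = -(1 / s) *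
      ((1 - B ω) * (Z₁ ω ^ (p / s) * log (Z₁ ω)) + B ω * (Z₂ ω ^ (p / s) * log (Z₂ ω))) := by
    filter_upwards [ae_of_ae_map hZ₁m.aemeasurable (hZ₁ ▸ ae_pos_gammaMeasure),
      ae_of_ae_map hZ₂m.aemeasurable (hZ₂ ▸ ae_pos_gammaMeasure)] with ω h₁ h₂
    rw [hX, apply_one_sub_mul_add_mul_of_eq_zero_or_eq_one (hB01 ω) (fun x => x ^ (-p) * log x),
      rpow_neg_one_div_rpow_neg_mul_log h₁, rpow_neg_one_div_rpow_neg_mul_log h₂]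
    ring
  rw [integral_congr_ae hdecomp, integral_const_mul,
    integral_bernoulli_mixture (f₁ := fun z => z ^ (p / s) * log z)
      (f₂ := fun z => z ^ (p / s) * log z) hB hB01 hindep (by fun_prop) (by fun_prop)
      (integrable_rpow_mul_log_of_map_eq_gammaMeasure hZ₁m hZ₁ hμ hr hp)
      (integrable_rpow_mul_log_of_map_eq_gammaMeasure hZ₂m hZ₂ hμ₁ hr hp₁),
    integral_rpow_mul_log_of_map_eq_gammaMeasure hZ₁m hZ₁ hμ hr hp,
    integral_rpow_mul_log_of_map_eq_gammaMeasure hZ₂m hZ₂ hμ₁ hr hp₁, measureReal_def, hBp,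
    add_right_comm, Gamma_add_one hp.ne', Gamma_add_one hμ.ne']
  have hσδ : σ + δ ≠ 0 := by rcases hδ with rfl | rfl <;> positivity
  have := (Gamma_pos_of_pos hμ).ne'
  have := (rpow_pos_of_pos hr (p / s)).ne'
  field_simp
  ring

/-- With `X` from the weighted exponential family (mixture representation with generator
`T(x) = x^(-s)`), for any real `p` with `μ + p/s > 0`,
`E[X^(-p) log X] = -(1/s)·(Γ(μ+p/s)/((μσ)^(p/s) Γ(μ)))·{(σ/(σ+δ))[ψ(μ+p/s) - log(μσ)]
  + (δ/(σ+δ))((μ+p/s)/μ)[ψ(μ+p/s+1) - log(μσ)]}`. -/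
theorem weighted_family_neg_p_log_moment {Ω : Type*} [MeasurableSpace Ω]
    (P : Measure Ω) [IsProbabilityMeasure P]
    (μ σ δ s : ℝ) (hμ : 0 < μ) (hσ : 0 < σ) (hδ : δ = 0 ∨ δ = 1) (hs : s ≠ 0)
    (B Z₁ Z₂ : Ω → ℝ)
    (hB : Measurable B) (hZ₁m : Measurable Z₁) (hZ₂m : Measurable Z₂)
    (hB01 : ∀ ω, B ω = 0 ∨ B ω = 1)
    (hBp : (P {ω | B ω = 1}).toReal = δ / (σ + δ))
    (hindep : IndepFun B (fun ω => (Z₁ ω, Z₂ ω)) P)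
    (hZ₁ : Measure.map Z₁ P = gammaMeasure μ (μ * σ))
    (hZ₂ : Measure.map Z₂ P = gammaMeasure (μ + 1) (μ * σ))
    (X : Ω → ℝ)
    (hX : ∀ ω, X ω = (1 - B ω) * Z₁ ω ^ (-1 / s) + B ω * Z₂ ω ^ (-1 / s))
    (p : ℝ) (hp : 0 < μ + p / s) :
    ∫ ω, X ω ^ (-p) * Real.log (X ω) ∂P =
      -(1 / s) * (Real.Gamma (μ + p / s) / ((μ * σ) ^ (p / s) * Real.Gamma μ)) *
        (σ / (σ + δ) * (digamma (μ + p / s) - Real.log (μ * σ)) +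
          δ / (σ + δ) * ((μ + p / s) / μ) *
            (digamma (μ + p / s + 1) - Real.log (μ * σ))) :=
  weighted_family_neg_p_log_moment_general P μ σ δ s hμ hσ hδ B Z₁ Z₂ hB hZ₁m hZ₂m hB01 hBp hindep
    hZ₁ hZ₂ X hX p hp
end

section
/- Let μ, σ > 0, δ ∈ {0,1}, s ≠ 0, and X as in the weighted exponential family with generator T(x) = x^(-s). Define m₁ = E[X^(-s) log(X^(-s))/(1 + δX^(-s))], m₂ = E[X^(-s) log(X^(-s))], m₃ = E[log(X^(-s))]. Then μ = (δ·m₁ + 1)/(σ·m₂ - m₃). -/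
/-!
Write `T = X^(-s) = (1 - B) Z₁ + B Z₂`. By independence, `E[g(T)]` is the mixture
`(1 - p) E[g(Z₁)] + p E[g(Z₂)]` with `p = P(B = 1)`, and since `Gamma(μ + 1, r)` is the
size-biased `Gamma(μ, r)`, `E[g(Z₂)] = (r / μ) E[Z₁ g(Z₁)]`; so all three moments are combinations
of `E[Zᵏ log Z]`, `Z ~ Gamma(μ, μσ)`. The analytic input is `r E[Z log Z] = a E[log Z] + 1` for
`Z ~ Gamma(a, r)`, obtained by integrating the derivative of `x^a e^(-rx) log x` over `(0, ∞)`;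
used for `a = μ` and `a = μ + 1`, it yields the identity.
-/

open Real MeasureTheory ProbabilityTheory Set Filter Topology

noncomputable def gammaKernel (a r x : ℝ) : ℝ := x ^ (a - 1) * exp (-(r * x))

lemma measurable_gammaKernel (a r : ℝ) : Measurable (gammaKernel a r) := by
  unfold gammaKernel; fun_prop

lemma gammaKernel_nonneg {a r x : ℝ} (hx : 0 < x) : 0 ≤ gammaKernel a r x := by
  unfold gammaKernel; positivity

lemma gammaKernel_add {a r x : ℝ} (hx : 0 < x) (t : ℝ) :
    gammaKernel (a + t) r x = x ^ t * gammaKernel a r x := by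
  rw [gammaKernel, gammaKernel, ← mul_assoc, ← rpow_add hx]; ring_nf

lemma mul_gammaKernel {a r x : ℝ} (hx : 0 < x) :
    x * gammaKernel a r x = gammaKernel (a + 1) r x := by
  rw [gammaKernel_add hx, rpow_one]

lemma integrableOn_gammaKernel {a r : ℝ} (ha : 0 < a) (hr : 0 < r) :
    IntegrableOn (gammaKernel a r) (Ioi 0) := by
  show IntegrableOn (fun x => x ^ (a - 1) * exp (-(r * x))) (Ioi 0)
  simpa [neg_mul] using
    integrableOn_rpow_mul_exp_neg_mul_rpow (s := a - 1) (p := 1) (by linarith) one_pos hr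

lemma integral_gammaKernel {a r : ℝ} (ha : 0 < a) (hr : 0 < r) :
    ∫ x in Ioi 0, gammaKernel a r x = Gamma a / r ^ a := by
  simp only [gammaKernel]
  rw [integral_rpow_mul_exp_neg_mul_Ioi ha hr, div_rpow zero_le_one hr.le, one_rpow,
    one_div_mul_eq_div]

lemma abs_log_le_rpow_add_rpow_neg_div {x ε : ℝ} (hx : 0 < x) (hε : 0 < ε) :
    |log x| ≤ (x ^ ε + x ^ (-ε)) / ε := by
  have hpos := rpow_pos_of_pos hx ε
  have hneg := rpow_pos_of_pos hx (-ε)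
  rcases le_total 1 x with h1 | h1
  · rw [abs_of_nonneg (log_nonneg h1)]
    calc log x ≤ x ^ ε / ε := log_le_rpow_div hx.le hε
      _ ≤ _ := by gcongr; linarith
  · rw [abs_of_nonpos (log_nonpos hx.le h1), ← log_inv]
    calc log x⁻¹ ≤ x⁻¹ ^ ε / ε := log_le_rpow_div (inv_nonneg.2 hx.le) hε
      _ = x ^ (-ε) / ε := by rw [inv_rpow hx.le, rpow_neg hx.le]
      _ ≤ _ := by gcongr; linarith

lemma integrableOn_log_mul_gammaKernel {a r : ℝ} (ha : 0 < a) (hr : 0 < r) :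
    IntegrableOn (fun x => log x * gammaKernel a r x) (Ioi 0) := by
  have hdom : IntegrableOn
      (fun x => (gammaKernel (a + a / 2) r x + gammaKernel (a + -(a / 2)) r x) / (a / 2))
      (Ioi 0) :=
    ((integrableOn_gammaKernel (by linarith) hr).add
      (integrableOn_gammaKernel (by linarith) hr)).div_const _
  refine hdom.mono' ((measurable_log.mul (measurable_gammaKernel a r)).aestronglyMeasurable)
    ((ae_restrict_iff' measurableSet_Ioi).2 (ae_of_all _ fun x (hx : 0 < x) => ?_))
  rw [norm_mul, norm_of_nonneg (gammaKernel_nonneg hx), norm_eq_abs, gammaKernel_add hx,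
    gammaKernel_add hx, ← add_mul, mul_div_right_comm]
  gcongr
  · exact gammaKernel_nonneg hx
  · exact abs_log_le_rpow_add_rpow_neg_div hx (half_pos ha)

lemma hasDerivAt_log_mul_gammaKernel_add_one {a r x : ℝ} (hx : 0 < x) :
    HasDerivAt (fun y => log y * gammaKernel (a + 1) r y)
      (a * (log x * gammaKernel a r x) - r * (log x * gammaKernel (a + 1) r x)
        + gammaKernel a r x) x := by
  have hk : gammaKernel (a + 1) r = fun y => y ^ a * exp (-(r * y)) := by
    funext y; rw [gammaKernel, add_sub_cancel_right]
  have hpow : HasDerivAt (fun y => y ^ a) (a * x ^ (a - 1)) x :=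
    hasDerivAt_rpow_const (Or.inl hx.ne')
  have hexp : HasDerivAt (fun y => exp (-(r * y))) (exp (-(r * x)) * -(r * 1)) x :=
    ((hasDerivAt_id x).const_mul r).neg.exp
  have hxa : x ^ a = x ^ (a - 1) * x := by rw [← rpow_add_one hx.ne', sub_add_cancel]
  rw [hk]
  refine ((hasDerivAt_log hx.ne').mul (hpow.mul hexp)).congr_deriv ?_
  simp only [Pi.mul_apply, gammaKernel]
  rw [hxa]
  field_simp
  ring

lemma tendsto_log_mul_gammaKernel_add_one_nhdsGT_zero {a r : ℝ} (ha : 0 < a) :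
    Tendsto (fun x => log x * gammaKernel (a + 1) r x) (𝓝[>] 0) (𝓝 0) := by
  have hexp : Continuous fun x => exp (-(r * x)) := by fun_prop
  simpa [gammaKernel, mul_assoc] using
    (tendsto_log_mul_rpow_nhdsGT_zero ha).mul ((hexp.tendsto 0).mono_left nhdsWithin_le_nhds)

lemma tendsto_log_mul_gammaKernel_atTop {a r : ℝ} (hr : 0 < r) :
    Tendsto (fun x => log x * gammaKernel a r x) atTop (𝓝 0) := by
  refine tendsto_of_tendsto_of_tendsto_of_le_of_le' tendsto_const_nhds
    (tendsto_rpow_mul_exp_neg_mul_atTop_nhds_zero a r hr) ?_ ?_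
  · filter_upwards [eventually_ge_atTop 1] with x hx
    exact mul_nonneg (log_nonneg hx) (gammaKernel_nonneg (by linarith))
  · filter_upwards [eventually_gt_atTop 0] with x hx
    calc log x * gammaKernel a r x ≤ x * gammaKernel a r x :=
          mul_le_mul_of_nonneg_right ((log_le_sub_one_of_pos hx).trans (by linarith))
            (gammaKernel_nonneg hx)
      _ = x ^ a * exp (-r * x) := by
          rw [mul_gammaKernel hx, gammaKernel, add_sub_cancel_right, neg_mul]

lemma integral_log_mul_gammaKernel_add_one {a r : ℝ} (ha : 0 < a) (hr : 0 < r) :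
    r * ∫ x in Ioi 0, log x * gammaKernel (a + 1) r x
      = a * (∫ x in Ioi 0, log x * gammaKernel a r x) + Gamma a / r ^ a := by
  have hcont : ContinuousWithinAt (fun x => log x * gammaKernel (a + 1) r x) (Ici 0) 0 := by
    rw [← Ioi_insert, continuousWithinAt_insert_self, ContinuousWithinAt, log_zero, zero_mul]
    exact tendsto_log_mul_gammaKernel_add_one_nhdsGT_zero ha
  have hint₀ : IntegrableOn (fun x => a * (log x * gammaKernel a r x)) (Ioi 0) :=
    (integrableOn_log_mul_gammaKernel ha hr).const_mul a
  have hint₁ : IntegrableOn (fun x => r * (log x * gammaKernel (a + 1) r x)) (Ioi 0) :=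
    (integrableOn_log_mul_gammaKernel (by linarith) hr).const_mul r
  have hint : IntegrableOn (fun x => a * (log x * gammaKernel a r x)
      - r * (log x * gammaKernel (a + 1) r x)) (Ioi 0) := hint₀.sub hint₁
  have hftc : a * (∫ x in Ioi 0, log x * gammaKernel a r x)
      - r * (∫ x in Ioi 0, log x * gammaKernel (a + 1) r x) + Gamma a / r ^ a = 0 := by
    have h := integral_Ioi_of_hasDerivAt_of_tendsto hcont
      (fun x hx => hasDerivAt_log_mul_gammaKernel_add_one hx)
      (hint.add (integrableOn_gammaKernel ha hr)) (tendsto_log_mul_gammaKernel_atTop hr)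
    rwa [integral_add hint (integrableOn_gammaKernel ha hr), integral_sub hint₀ hint₁,
      integral_const_mul, integral_const_mul, integral_gammaKernel ha hr, log_zero, zero_mul,
      sub_zero] at h
  linarith

namespace ProbabilityTheory

lemma gammaPDFReal_eq_indicator (a r : ℝ) :
    gammaPDFReal a r = (Ici 0).indicator fun x => r ^ a / Gamma a * gammaKernel a r x := by
  funext x
  by_cases hx : 0 ≤ x
  · rw [gammaPDFReal, if_pos hx, indicator_of_mem (mem_Ici.2 hx), gammaKernel, mul_assoc]
  · rw [gammaPDFReal, if_neg hx, indicator_of_notMem (fun h => hx (mem_Ici.1 h))]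

lemma measurable_gammaPDF (a r : ℝ) : Measurable (gammaPDF a r) :=
  (measurable_gammaPDFReal a r).ennreal_ofReal

lemma toReal_gammaPDF {a r : ℝ} (ha : 0 < a) (hr : 0 < r) (x : ℝ) :
    (gammaPDF a r x).toReal = gammaPDFReal a r x :=
  ENNReal.toReal_ofReal (gammaPDFReal_nonneg ha hr x)

lemma integral_gammaMeasure {a r : ℝ} (ha : 0 < a) (hr : 0 < r) (g : ℝ → ℝ) :
    ∫ x, g x ∂gammaMeasure a r
      = r ^ a / Gamma a * ∫ x in Ioi 0, g x * gammaKernel a r x := by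
  rw [gammaMeasure, integral_withDensity_eq_integral_toReal_smul
    (measurable_gammaPDF a r) (ae_of_all _ fun _ => ENNReal.ofReal_lt_top)]
  simp only [toReal_gammaPDF ha hr, smul_eq_mul, gammaPDFReal_eq_indicator,
    ← indicator_mul_left]
  rw [integral_indicator measurableSet_Ici, integral_Ici_eq_integral_Ioi, ← integral_const_mul]
  congr 1 with x
  ring

lemma integrable_gammaMeasure_iff {a r : ℝ} (ha : 0 < a) (hr : 0 < r) {g : ℝ → ℝ} :
    Integrable g (gammaMeasure a r) ↔ IntegrableOn (fun x => g x * gammaKernel a r x) (Ioi 0) := by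
  rw [gammaMeasure, integrable_withDensity_iff_integrable_smul'
    (measurable_gammaPDF a r) (ae_of_all _ fun _ => ENNReal.ofReal_lt_top)]
  simp only [toReal_gammaPDF ha hr, smul_eq_mul, gammaPDFReal_eq_indicator,
    ← indicator_mul_left]
  have hc : IsUnit (r ^ a / Gamma a) := (by positivity : r ^ a / Gamma a ≠ 0).isUnit
  rw [integrable_indicator_iff measurableSet_Ici, integrableOn_Ici_iff_integrableOn_Ioi,
    IntegrableOn, IntegrableOn, ← integrable_const_mul_iff hc (fun x => g x * gammaKernel a r x)]
  simp only [mul_comm, mul_assoc]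

lemma ae_nonneg_gammaMeasure (a r : ℝ) : ∀ᵐ x ∂gammaMeasure a r, 0 ≤ x :=
  (ae_withDensity_iff (measurable_gammaPDF a r)).2
    (ae_of_all _ fun _ hx => not_lt.1 fun h => hx (gammaPDF_of_neg h))

lemma integral_gammaMeasure_add_one {a r : ℝ} (ha : 0 < a) (hr : 0 < r) (g : ℝ → ℝ) :
    ∫ x, g x ∂gammaMeasure (a + 1) r = r / a * ∫ x, x * g x ∂gammaMeasure a r := by
  rw [integral_gammaMeasure (by linarith) hr, integral_gammaMeasure ha hr,
    setIntegral_congr_fun measurableSet_Ioi fun x (hx : 0 < x) => by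
      rw [← mul_gammaKernel hx, mul_left_comm],
    Gamma_add_one ha.ne', rpow_add_one hr.ne']
  field_simp

lemma integrable_gammaMeasure_add_one_iff {a r : ℝ} (ha : 0 < a) (hr : 0 < r) {g : ℝ → ℝ} :
    Integrable g (gammaMeasure (a + 1) r) ↔ Integrable (fun x => x * g x) (gammaMeasure a r) := by
  rw [integrable_gammaMeasure_iff (by linarith) hr, integrable_gammaMeasure_iff ha hr]
  refine integrableOn_congr_fun (fun x (hx : 0 < x) => ?_) measurableSet_Ioi
  rw [← mul_gammaKernel hx, mul_assoc, mul_left_comm]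

lemma integrable_log_gammaMeasure {a r : ℝ} (ha : 0 < a) (hr : 0 < r) :
    Integrable log (gammaMeasure a r) := by
  rw [integrable_gammaMeasure_iff ha hr]
  exact integrableOn_log_mul_gammaKernel ha hr

lemma integrable_mul_log_gammaMeasure {a r : ℝ} (ha : 0 < a) (hr : 0 < r) :
    Integrable (fun x => x * log x) (gammaMeasure a r) :=
  (integrable_gammaMeasure_add_one_iff ha hr).1 (integrable_log_gammaMeasure (by linarith) hr)

-- By size-biasing, this is the digamma recurrence `ψ(a + 1) = ψ(a) + 1 / a` in disguise.
lemma mul_integral_mul_log_gammaMeasure {a r : ℝ} (ha : 0 < a) (hr : 0 < r) :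
    r * ∫ x, x * log x ∂gammaMeasure a r = a * (∫ x, log x ∂gammaMeasure a r) + 1 := by
  rw [integral_gammaMeasure ha hr, integral_gammaMeasure ha hr,
    setIntegral_congr_fun measurableSet_Ioi fun x (hx : 0 < x) => by
      rw [mul_comm x, mul_assoc, mul_gammaKernel hx],
    mul_left_comm, integral_log_mul_gammaKernel_add_one ha hr]
  have : 0 < Gamma a := Gamma_pos_of_pos ha
  have : 0 < r ^ a := rpow_pos_of_pos hr a
  field_simp

lemma integrable_mul_log_div_gammaMeasure {a r δ : ℝ} (ha : 0 < a) (hr : 0 < r) (hδ : 0 ≤ δ) :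
    Integrable (fun x => x * log x / (1 + δ * x)) (gammaMeasure a r) := by
  refine (integrable_mul_log_gammaMeasure ha hr).mono
    (by fun_prop : Measurable fun x : ℝ => x * log x / (1 + δ * x)).aestronglyMeasurable ?_
  filter_upwards [ae_nonneg_gammaMeasure a r] with x hx
  rw [norm_div]
  exact div_le_self (norm_nonneg _) (by rw [norm_of_nonneg (by positivity)]; nlinarith)

lemma integral_mul_log_div_add_integral_mul_gammaMeasure {a r δ : ℝ} (ha : 0 < a) (hr : 0 < r)
    (hδ : 0 ≤ δ) :
    (∫ x, x * log x / (1 + δ * x) ∂gammaMeasure a r)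
      + δ * ∫ x, x * (x * log x / (1 + δ * x)) ∂gammaMeasure a r
      = ∫ x, x * log x ∂gammaMeasure a r := by
  rw [← integral_const_mul, ← integral_add (integrable_mul_log_div_gammaMeasure ha hr hδ)
    (((integrable_gammaMeasure_add_one_iff ha hr).1
      (integrable_mul_log_div_gammaMeasure (by linarith) hr hδ)).const_mul δ)]
  refine integral_congr_ae ?_
  filter_upwards [ae_nonneg_gammaMeasure a r] with x hx
  have : 0 < 1 + δ * x := by positivity
  field_simp

lemma integral_comp_bernoulli_mixture {Ω : Type*} [MeasurableSpace Ω] {P : Measure Ω}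
    [IsProbabilityMeasure P] {B Y₁ Y₂ : Ω → ℝ} {ν₁ ν₂ : Measure ℝ} (hB : Measurable B)
    (hB01 : ∀ ω, B ω = 0 ∨ B ω = 1) (hindep : IndepFun B (fun ω => (Y₁ ω, Y₂ ω)) P)
    (hY₁ : Measurable Y₁) (hY₂ : Measurable Y₂) (hν₁ : P.map Y₁ = ν₁) (hν₂ : P.map Y₂ = ν₂)
    {g : ℝ → ℝ} (hg : Measurable g) (hg₁ : Integrable g ν₁) (hg₂ : Integrable g ν₂) :
    ∫ ω, g ((1 - B ω) * Y₁ ω + B ω * Y₂ ω) ∂P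
      = (1 - P.real {ω | B ω = 1}) * ∫ y, g y ∂ν₁ + P.real {ω | B ω = 1} * ∫ y, g y ∂ν₂ := by
  subst hν₁ hν₂
  have hBind : B = {ω | B ω = 1}.indicator 1 := by
    funext ω
    rcases hB01 ω with h | h <;> simp [h]
  have hBint : Integrable B P := by
    rw [hBind]
    exact (integrable_const 1).indicator (hB (measurableSet_singleton 1))
  have hEB : ∫ ω, B ω ∂P = P.real {ω | B ω = 1} := by
    conv_lhs => rw [hBind]
    exact integral_indicator_one (hB (measurableSet_singleton 1))
  have hind₁ : IndepFun (fun ω => 1 - B ω) (fun ω => g (Y₁ ω)) P :=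
    hindep.comp (measurable_const.sub measurable_id) (hg.comp measurable_fst)
  have hind₂ : IndepFun B (fun ω => g (Y₂ ω)) P :=
    hindep.comp measurable_id (hg.comp measurable_snd)
  have hgY₁ := hg₁.comp_measurable hY₁
  have hgY₂ := hg₂.comp_measurable hY₂
  calc ∫ ω, g ((1 - B ω) * Y₁ ω + B ω * Y₂ ω) ∂P
      = ∫ ω, (1 - B ω) * g (Y₁ ω) + B ω * g (Y₂ ω) ∂P := by
        congr 1 with ω
        rcases hB01 ω with h | h <;> simp [h]
    _ = (∫ ω, (1 - B ω) ∂P) * ∫ ω, g (Y₁ ω) ∂P + (∫ ω, B ω ∂P) * ∫ ω, g (Y₂ ω) ∂P := by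
        rw [← hind₁.integral_mul_eq_mul_integral
          ((measurable_const.sub hB).aestronglyMeasurable) hgY₁.aestronglyMeasurable,
          ← hind₂.integral_mul_eq_mul_integral hB.aestronglyMeasurable hgY₂.aestronglyMeasurable]
        exact integral_add (hind₁.integrable_mul ((integrable_const 1).sub hBint) hgY₁)
          (hind₂.integrable_mul hBint hgY₂)
    _ = _ := by
        rw [integral_sub (integrable_const 1) hBint, hEB, integral_const, probReal_univ,
          one_smul, integral_map hY₁.aemeasurable hg.aestronglyMeasurable,
          integral_map hY₂.aemeasurable hg.aestronglyMeasurable]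

end ProbabilityTheory

open ProbabilityTheory

/-- With `X` from the weighted exponential family (generator `T(x) = x^(-s)`) and
`m₁ = E[X^(-s)log(X^(-s))/(1+δX^(-s))]`, `m₂ = E[X^(-s)log(X^(-s))]`,
`m₃ = E[log(X^(-s))]`, the exact parameter-recovery identity
`μ·(σ·m₂ − m₃) = δ·m₁ + 1` holds, i.e. `μ = (δ·m₁+1)/(σ·m₂−m₃)`. -/
theorem weighted_family_mu_identity {Ω : Type*} [MeasurableSpace Ω]
    (P : Measure Ω) [IsProbabilityMeasure P]
    (μ σ δ s : ℝ) (hμ : 0 < μ) (hσ : 0 < σ) (hδ : δ = 0 ∨ δ = 1) (hs : s ≠ 0)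
    (B Z₁ Z₂ : Ω → ℝ)
    (hB : Measurable B) (hZ₁m : Measurable Z₁) (hZ₂m : Measurable Z₂)
    (hB01 : ∀ ω, B ω = 0 ∨ B ω = 1)
    (hBp : (P {ω | B ω = 1}).toReal = δ / (σ + δ))
    (hindep : IndepFun B (fun ω => (Z₁ ω, Z₂ ω)) P)
    (hZ₁ : Measure.map Z₁ P = gammaMeasure μ (μ * σ))
    (hZ₂ : Measure.map Z₂ P = gammaMeasure (μ + 1) (μ * σ))
    (X : Ω → ℝ)
    (hX : ∀ ω, X ω = (1 - B ω) * Z₁ ω ^ (-1 / s) + B ω * Z₂ ω ^ (-1 / s)) :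
    μ * (σ * (∫ ω, X ω ^ (-s) * Real.log (X ω ^ (-s)) ∂P) -
        ∫ ω, Real.log (X ω ^ (-s)) ∂P) =
      δ * (∫ ω, X ω ^ (-s) * Real.log (X ω ^ (-s)) / (1 + δ * X ω ^ (-s)) ∂P) + 1 := by
  have hr : 0 < μ * σ := mul_pos hμ hσ
  have hμ₁ : 0 < μ + 1 := by linarith
  have hδ₀ : 0 ≤ δ := by rcases hδ with rfl | rfl <;> norm_num
  have hT : ∀ᵐ ω ∂P, X ω ^ (-s) = (1 - B ω) * Z₁ ω + B ω * Z₂ ω := by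
    filter_upwards [ae_of_ae_map hZ₁m.aemeasurable (hZ₁ ▸ ae_nonneg_gammaMeasure _ _),
      ae_of_ae_map hZ₂m.aemeasurable (hZ₂ ▸ ae_nonneg_gammaMeasure _ _)] with ω h₁ h₂
    rcases hB01 ω with h | h <;>
      simp [hX, h, ← rpow_mul h₁, ← rpow_mul h₂, hs]
  have hlaw : ∀ g : ℝ → ℝ, Measurable g → Integrable g (gammaMeasure μ (μ * σ)) →
      Integrable g (gammaMeasure (μ + 1) (μ * σ)) → ∫ ω, g (X ω ^ (-s)) ∂P = σ / (σ + δ) *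
        ((∫ x, g x ∂gammaMeasure μ (μ * σ)) + δ * ∫ x, x * g x ∂gammaMeasure μ (μ * σ)) := by
    intro g hg h₁ h₂
    rw [integral_congr_ae (hT.mono fun ω h => by rw [h]),
      integral_comp_bernoulli_mixture hB hB01 hindep hZ₁m hZ₂m hZ₁ hZ₂ hg h₁ h₂, measureReal_def,
      hBp, integral_gammaMeasure_add_one hμ hr, mul_div_cancel_left₀ _ hμ.ne']
    field_simp
    ring
  have hstein₀ := mul_integral_mul_log_gammaMeasure hμ hr
  have hstein₁ := mul_integral_mul_log_gammaMeasure hμ₁ hr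
  rw [integral_gammaMeasure_add_one hμ hr, integral_gammaMeasure_add_one hμ hr,
    mul_div_cancel_left₀ _ hμ.ne'] at hstein₁
  rw [hlaw log measurable_log (integrable_log_gammaMeasure hμ hr)
      (integrable_log_gammaMeasure hμ₁ hr),
    hlaw (fun x => x * log x) (by fun_prop) (integrable_mul_log_gammaMeasure hμ hr)
      (integrable_mul_log_gammaMeasure hμ₁ hr),
    hlaw (fun x => x * log x / (1 + δ * x)) (by fun_prop)
      (integrable_mul_log_div_gammaMeasure hμ hr hδ₀)
      (integrable_mul_log_div_gammaMeasure hμ₁ hr hδ₀),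
    integral_mul_log_div_add_integral_mul_gammaMeasure hμ hr hδ₀]
  linear_combination (norm := skip) (σ / (σ + δ)) * hstein₀ + (δ / (σ + δ)) * hstein₁
  field_simp
  ring
end
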